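/- There is a series ∑ y_i in c₀ which is weakly unconditionally Cauchy but not unconditionally convergent, and such that for every integer k ≥ 2 the series ∑ y_i^{⊗k} of diagonal tensors is unconditionally Cauchy in the k-fold algebraic tensor product ⊗^k c₀ with respect to the projective seminorm: for every ε > 0 there exists N ∈ ℕ such that for every finite set F of indices all greater than N, π(∑_{j∈F} y_j^{⊗k}) < ε. One such series is given by y_i = eₙ/n whenever n(n−1)/2 < i ≤ n(n+1)/2. -/

import Mathlib

/-!
Take `yᵢ = eₙ / n`, repeated `n` times in the `n`-th block of indices. On a finite set of indices,
grouping by blocks turns `∑ |φ yᵢ|` into `∑ cₙ |φ eₙ|` with `0 ≤ cₙ ≤ 1`, which is at most `‖φ‖`;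
but every full block sums to `eₙ`, so the series is not unconditionally convergent.

For `k ≥ 2` the same grouping gives `∑_{j ∈ F} yⱼ^{⊗k} = ∑ₙ aₙ eₙ^{⊗k}` with `aₙ ≤ n · n⁻ᵏ ≤ n⁻¹`,
and a diagonal tensor `∑ aₙ eₙ^{⊗k}` has projective norm at most `maxₙ |aₙ|`: for independent
random sign vectors `σ¹, …, σᵏ⁻¹` it is the mean of the elementary tensors
`(∑ aₙ σ¹ₙ ⋯ σᵏ⁻¹ₙ eₙ) ⊗ (∑ σ¹ₙ eₙ) ⊗ ⋯ ⊗ (∑ σᵏ⁻¹ₙ eₙ)`, each of norm at most `maxₙ |aₙ|` in `c₀`.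
-/

open Filter Topology Metric

noncomputable section

/-- The Banach space `c₀` of real sequences converging to zero, with the sup norm. -/
abbrev c0 : Type := ZeroAtInftyContinuousMap ℕ ℝ

/-- The unit vector basis of `c₀`. -/
def e (n : ℕ) : c0 :=
  { toFun := fun i => if i = n then (1 : ℝ) else 0
    continuous_toFun := continuous_of_discreteTopology
    zero_at_infty' := by
      rw [Filter.cocompact_eq_cofinite]
      refine tendsto_const_nhds.congr' ?_
      have h : {n}ᶜ ∈ (Filter.cofinite : Filter ℕ) := by simp [Filter.cofinite]
      filter_upwards [h] with i hi
      simp only [Set.mem_compl_iff, Set.mem_singleton_iff] at hi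
      simp [hi] }

/-- A series `∑ xₙ` is weakly unconditionally Cauchy (w.u.C.) if `∑ |φ (xₙ)| < ∞` for every
continuous linear functional `φ`. -/
def WUC {X : Type*} [NormedAddCommGroup X] [NormedSpace ℝ X] (x : ℕ → X) : Prop :=
  ∀ φ : X →L[ℝ] ℝ, Summable fun n => |φ (x n)|

/-- A sequence is equivalent to the unit vector basis of `c₀`: there are `0 < c ≤ C` with
`c · maxᵢ |aᵢ| ≤ ‖∑ aᵢ xᵢ‖ ≤ C · maxᵢ |aᵢ|` for all finite scalar families. -/
def IsEquivC0Basis {X : Type*} [NormedAddCommGroup X] [NormedSpace ℝ X] (x : ℕ → X) : Prop :=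
  ∃ c C : ℝ, 0 < c ∧ c ≤ C ∧ ∀ (n : ℕ) (a : ℕ → ℝ),
    c * (⨆ i : Fin n, |a i|) ≤ ‖∑ i ∈ Finset.range n, a i • x i‖ ∧
    ‖∑ i ∈ Finset.range n, a i • x i‖ ≤ C * (⨆ i : Fin n, |a i|)

/-- A map (polynomial) is unconditionally converging if for every w.u.C. series `∑ xₙ` the
sequence of values at the partial sums converges in norm. -/
def UCPoly {X Y : Type*} [NormedAddCommGroup X] [NormedSpace ℝ X]
    [NormedAddCommGroup Y] [NormedSpace ℝ Y] (P : X → Y) : Prop :=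
  ∀ x : ℕ → X, WUC x →
    ∃ L : Y, Tendsto (fun n => P (∑ i ∈ Finset.range n, x i)) atTop (𝓝 L)

/-- An operator is unconditionally converging if it maps w.u.C. series to unconditionally
convergent series. -/
def UCOp {X Y : Type*} [NormedAddCommGroup X] [NormedSpace ℝ X]
    [NormedAddCommGroup Y] [NormedSpace ℝ Y] (T : X → Y) : Prop :=
  ∀ x : ℕ → X, WUC x → Summable fun n => T (x n)

/-- A map (polynomial or operator) is compact if the image of the closed unit ball is
relatively norm compact. -/
def CompactMap {X Y : Type*} [NormedAddCommGroup X] [NormedSpace ℝ X]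
    [NormedAddCommGroup Y] [NormedSpace ℝ Y] (P : X → Y) : Prop :=
  IsCompact (closure (P '' Metric.closedBall 0 1))

/-- A set is relatively weakly compact if its closure in the weak topology is compact. -/
def RelWeakCompact {Y : Type*} [NormedAddCommGroup Y] [NormedSpace ℝ Y] (s : Set Y) : Prop :=
  IsCompact (closure ((toWeakSpace ℝ Y) '' s))

/-- A WUC-set is the image of the closed unit ball of `c₀` under a bounded operator. -/
def IsWUCSet {X : Type*} [NormedAddCommGroup X] [NormedSpace ℝ X] (s : Set X) : Prop :=
  ∃ T : c0 →L[ℝ] X, s = ⇑T '' Metric.closedBall 0 1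
namespace SignAveraging

open Finset

variable {R : Type*} [CommRing R]

def boolSign (b : Bool) : R := if b then -1 else 1

lemma boolSign_mul_self (b : Bool) : boolSign b * boolSign b = (1 : R) := by
  cases b <;> simp [boolSign]

variable {ι : Type*} [Fintype ι] [DecidableEq ι]

lemma sum_boolSign_mul_boolSign (i i' : ι) :
    ∑ σ : ι → Bool, boolSign (σ i) * boolSign (σ i') =
      if i = i' then (2 : R) ^ Fintype.card ι else 0 := by
  have factor (σ : ι → Bool) (i₀ : ι) :
      boolSign (σ i₀) = ∏ l, if l = i₀ then boolSign (σ l) else (1 : R) := by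
    rw [Fintype.prod_ite_eq']
  simp_rw [factor _ i, factor _ i', ← prod_mul_distrib]
  rw [← Fintype.prod_sum (fun l b => (if l = i then boolSign b else (1 : R)) *
    if l = i' then boolSign b else 1)]
  split_ifs with h
  · subst h
    rw [← card_univ, ← prod_const]
    refine prod_congr rfl fun l _ => ?_
    by_cases hl : l = i <;> simp [hl, boolSign_mul_self, one_add_one_eq_two]
  · refine prod_eq_zero (mem_univ i) ?_
    simp [h, boolSign]

variable {k : ℕ}

def signCoeff (a : ι → R) (σ : Fin k → ι → Bool) : Fin (k + 1) → ι → R :=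
  Fin.cons (fun i => a i * ∏ j, boolSign (σ j i)) fun j i => boolSign (σ j i)

lemma sum_prod_signCoeff (a : ι → R) (r : Fin (k + 1) → ι) :
    ∑ σ : Fin k → ι → Bool, ∏ j, signCoeff a σ j (r j) =
      if ∀ j : Fin k, r j.succ = r 0 then (2 ^ Fintype.card ι) ^ k * a (r 0) else 0 := by
  have expand (σ : Fin k → ι → Bool) : ∏ j, signCoeff a σ j (r j) =
      a (r 0) * ∏ j, boolSign (σ j (r 0)) * boolSign (σ j (r j.succ)) := by
    simp [signCoeff, Fin.prod_univ_succ, prod_mul_distrib, mul_assoc]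
  simp_rw [expand, ← mul_sum]
  rw [← Fintype.prod_sum fun (j : Fin k) (s : ι → Bool) =>
    boolSign (s (r 0)) * boolSign (s (r j.succ))]
  simp_rw [sum_boolSign_mul_boolSign, Fintype.prod_ite_zero, eq_comm (a := r 0)]
  split_ifs <;> simp [mul_comm]

lemma sum_ite_forall_succ_eq_zero {M : Type*} [AddCommMonoid M] (f : (Fin (k + 1) → ι) → M) :
    ∑ r, (if ∀ j : Fin k, r j.succ = r 0 then f r else 0) = ∑ i, f fun _ => i := by
  rw [← (Fin.consEquiv fun _ => ι).sum_comp, Fintype.sum_prod_type]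
  refine sum_congr rfl fun i _ => ?_
  simp only [Fin.consEquiv_apply, Fin.cons_succ, Fin.cons_zero, ← funext_iff]
  rw [Fintype.sum_ite_eq']
  exact congrArg f (Fin.cons_self_tail fun _ => i)

variable {E : Type*} [AddCommGroup E] [Module R E]

theorem sum_tprod_signCoeff (v : ι → E) (a : ι → R) :
    ∑ σ : Fin k → ι → Bool, (⨂ₜ[R] j, ∑ i, signCoeff a σ j i • v i) =
      ((2 : R) ^ Fintype.card ι) ^ k • ∑ i, a i • ⨂ₜ[R] _ : Fin (k + 1), v i := by
  simp_rw [MultilinearMap.map_sum (PiTensorProduct.tprod R), MultilinearMap.map_smul_univ]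
  rw [sum_comm]
  refine (sum_congr rfl fun r _ => (Finset.sum_smul).symm).trans ?_
  simp_rw [sum_prod_signCoeff, ite_smul, zero_smul, sum_ite_forall_succ_eq_zero, smul_sum,
    mul_smul]

lemma abs_boolSign (b : Bool) : |(boolSign b : ℝ)| = 1 := by
  cases b <;> simp [boolSign]

theorem norm_sum_smul_tprod_const_le {E : Type*} [SeminormedAddCommGroup E] [NormedSpace ℝ E]
    {v : ι → E} (hv : ∀ b : ι → ℝ, ‖∑ i, b i • v i‖ ≤ ‖b‖) (a : ι → ℝ) :
    ‖∑ i, a i • ⨂ₜ[ℝ] _ : Fin (k + 1), v i‖ ≤ ‖a‖ := by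
  set q : ℝ := ((2 : ℝ) ^ Fintype.card ι) ^ k
  have hq : 0 < q := by positivity
  have hfactor (σ : Fin k → ι → Bool) : ∏ j, ‖∑ i, signCoeff a σ j i • v i‖ ≤ ‖a‖ := by
    rw [Fin.prod_univ_succ, ← mul_one ‖a‖]
    gcongr
    · refine (hv _).trans <| (pi_norm_le_iff_of_nonneg (norm_nonneg a)).2 fun i => ?_
      simpa [signCoeff, abs_boolSign] using norm_le_pi_norm a i
    · refine prod_le_one (fun _ _ => norm_nonneg _) fun j _ => (hv _).trans ?_
      refine (pi_norm_le_iff_of_nonneg zero_le_one).2 fun i => ?_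
      simp [signCoeff, abs_boolSign]
  have hq_smul : ∑ i, a i • (⨂ₜ[ℝ] _ : Fin (k + 1), v i) =
      q⁻¹ • ∑ σ : Fin k → ι → Bool, ⨂ₜ[ℝ] j, ∑ i, signCoeff a σ j i • v i := by
    rw [sum_tprod_signCoeff, inv_smul_smul₀ hq.ne']
  calc ‖∑ i, a i • (⨂ₜ[ℝ] _ : Fin (k + 1), v i)‖
      ≤ q⁻¹ * ∑ σ : Fin k → ι → Bool, ‖a‖ := by
        rw [hq_smul, norm_smul, Real.norm_of_nonneg (inv_nonneg.2 hq.le)]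
        gcongr
        exact (norm_sum_le _ _).trans (sum_le_sum fun σ _ =>
          (PiTensorProduct.projectiveSeminorm_tprod_le _).trans (hfactor σ))
    _ = ‖a‖ := by
        have hcard : (Fintype.card (Fin k → ι → Bool) : ℝ) = q := by simp [q]
        rw [sum_const, card_univ, nsmul_eq_mul, hcard, inv_mul_cancel_left₀ hq.ne']

end SignAveraging

namespace ZeroAtInftyContinuousMap

open scoped ZeroAtInfty

variable {α β : Type*} [TopologicalSpace α] [SeminormedAddCommGroup β]

lemma norm_le (f : C₀(α, β)) {C : ℝ} (hC : 0 ≤ C) :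
    ‖f‖ ≤ C ↔ ∀ x, ‖f x‖ ≤ C :=
  BoundedContinuousFunction.norm_le (f := f.toBCF) hC

lemma norm_coe_le_norm (f : C₀(α, β)) (x : α) : ‖f x‖ ≤ ‖f‖ :=
  f.toBCF.norm_coe_le_norm x

lemma sum_apply {ι : Type*} (s : Finset ι) (f : ι → C₀(α, β)) (x : α) :
    (∑ i ∈ s, f i) x = ∑ i ∈ s, f i x :=
  map_sum (⟨⟨fun g : C₀(α, β) => g x, rfl⟩, fun _ _ => rfl⟩ : C₀(α, β) →+ β) f s

end ZeroAtInftyContinuousMap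

section UnitVectors

open Finset

lemma e_apply (n i : ℕ) : e n i = if i = n then 1 else 0 := rfl

lemma one_le_norm_e (n : ℕ) : 1 ≤ ‖e n‖ := by
  simpa [e_apply] using (e n).norm_coe_le_norm n

lemma norm_sum_smul_e_le {ι : Type*} [Fintype ι] {f : ι → ℕ} (hf : Function.Injective f)
    (b : ι → ℝ) : ‖∑ i, b i • e (f i)‖ ≤ ‖b‖ := by
  classical
  refine ((∑ i, b i • e (f i)).norm_le (norm_nonneg b)).2 fun j => ?_
  simp only [ZeroAtInftyContinuousMap.sum_apply, ZeroAtInftyContinuousMap.coe_smul, Pi.smul_apply,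
    e_apply, smul_eq_mul, mul_ite, mul_one, mul_zero]
  by_cases hj : ∃ i, f i = j
  · obtain ⟨i, rfl⟩ := hj
    simp_rw [hf.eq_iff, sum_ite_eq, if_pos (mem_univ i)]
    exact norm_le_pi_norm b i
  · simp only [not_exists] at hj
    simp [fun i => Ne.symm (hj i)]

lemma sum_abs_apply_e_le_opNorm (φ : c0 →L[ℝ] ℝ) (s : Finset ℕ) :
    ∑ n ∈ s, |φ (e n)| ≤ ‖φ‖ := by
  set b : s → ℝ := fun n => SignType.sign (φ (e n))
  have hb : ‖b‖ ≤ 1 := (pi_norm_le_iff_of_nonneg zero_le_one).2 fun n => by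
    rcases lt_trichotomy (φ (e n)) 0 with h | h | h <;> simp [b, h]
  calc ∑ n ∈ s, |φ (e n)| = φ (∑ n : s, b n • e n) := by
        rw [← sum_coe_sort s]
        simp [b, map_sum]
    _ ≤ ‖φ‖ * ‖∑ n : s, b n • e n‖ := (Real.le_norm_self _).trans (φ.le_opNorm _)
    _ ≤ ‖φ‖ := mul_le_of_le_one_right (norm_nonneg φ)
        ((norm_sum_smul_e_le Subtype.val_injective b).trans hb)

end UnitVectors

section Blocks

open Finset

def triangular (n : ℕ) : ℕ := n * (n + 1) / 2

lemma triangular_succ (n : ℕ) : triangular (n + 1) = triangular n + (n + 1) := by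
  rw [triangular, triangular, show (n + 1) * (n + 1 + 1) = n * (n + 1) + (n + 1) * 2 by ring,
    Nat.add_mul_div_right _ _ two_pos]

lemma triangular_mono : Monotone triangular :=
  monotone_nat_of_le_succ fun n => by rw [triangular_succ]; omega

lemma le_triangular_self (n : ℕ) : n ≤ triangular n := by
  induction n with
  | zero => exact le_rfl
  | succ n ih => rw [triangular_succ]; omega

lemma exists_le_triangular (i : ℕ) : ∃ n, i ≤ triangular n := ⟨i, le_triangular_self i⟩

def blockIndex (i : ℕ) : ℕ := Nat.find (exists_le_triangular i)

lemma blockIndex_eq_succ_iff {i n : ℕ} :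
    blockIndex i = n + 1 ↔ i ∈ Ioc (triangular n) (triangular (n + 1)) := by
  rw [blockIndex, Nat.find_eq_iff, mem_Ioc]
  constructor
  · rintro ⟨hle, hmin⟩
    exact ⟨not_le.1 (hmin n n.lt_succ_self), hle⟩
  · rintro ⟨hlt, hle⟩
    exact ⟨hle, fun _ hm => not_le.2 ((triangular_mono (Nat.le_of_lt_succ hm)).trans_lt hlt)⟩

lemma lt_blockIndex {i N : ℕ} (h : triangular N < i) : N < blockIndex i :=
  (Nat.lt_find_iff (exists_le_triangular i) N).2 fun _ hm =>
    not_le.2 ((triangular_mono hm).trans_lt h)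

lemma card_filter_blockIndex_eq_mul_inv_le (s : Finset ℕ) (n : ℕ) :
    (#{i ∈ s | blockIndex i = n} : ℝ) * (n : ℝ)⁻¹ ≤ 1 := by
  rcases n with _ | n
  -- block `0` is `{0}`; the bound holds there only because `(0 : ℝ)⁻¹ = 0`
  · simp
  refine mul_inv_le_one_of_le₀ ?_ (Nat.cast_nonneg _)
  calc (#{i ∈ s | blockIndex i = n + 1} : ℝ) ≤ #(Ioc (triangular n) (triangular (n + 1))) := by
        exact_mod_cast card_le_card fun i hi => blockIndex_eq_succ_iff.1 (mem_filter.1 hi).2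
    _ = ((n + 1 : ℕ) : ℝ) := by rw [Nat.card_Ioc, triangular_succ, Nat.add_sub_cancel_left]

def blockSeq (i : ℕ) : c0 := (blockIndex i : ℝ)⁻¹ • e (blockIndex i)

lemma blockSeq_eq {i n : ℕ} (hi : i ∈ Ioc (triangular n) (triangular (n + 1))) :
    blockSeq i = ((n + 1 : ℕ) : ℝ)⁻¹ • e (n + 1) := by
  rw [blockSeq, blockIndex_eq_succ_iff.2 hi]

lemma sum_blockSeq_Ioc (n : ℕ) :
    ∑ i ∈ Ioc (triangular n) (triangular (n + 1)), blockSeq i = e (n + 1) := by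
  rw [sum_congr rfl fun i => blockSeq_eq, sum_const, Nat.card_Ioc, triangular_succ,
    Nat.add_sub_cancel_left, ← Nat.cast_smul_eq_nsmul ℝ, smul_smul,
    mul_inv_cancel₀ (Nat.cast_ne_zero.2 n.succ_ne_zero), one_smul]

theorem wuc_blockSeq : WUC blockSeq := fun φ => by
  refine summable_of_sum_le (fun i => abs_nonneg _) (c := ‖φ‖) fun u => ?_
  have hterm (i : ℕ) : |φ (blockSeq i)| = (blockIndex i : ℝ)⁻¹ * |φ (e (blockIndex i))| := by
    rw [blockSeq, map_smul, smul_eq_mul, abs_mul, abs_of_nonneg (by positivity)]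
  calc ∑ i ∈ u, |φ (blockSeq i)|
      = ∑ n ∈ u.image blockIndex, (#{i ∈ u | blockIndex i = n} : ℝ) * (n : ℝ)⁻¹ * |φ (e n)| := by
        simp_rw [hterm, sum_comp (fun n : ℕ => (n : ℝ)⁻¹ * |φ (e n)|) blockIndex, nsmul_eq_mul,
          mul_assoc]
    _ ≤ ∑ n ∈ u.image blockIndex, |φ (e n)| := sum_le_sum fun n _ =>
        mul_le_of_le_one_left (abs_nonneg _) (card_filter_blockIndex_eq_mul_inv_le u n)
    _ ≤ ‖φ‖ := sum_abs_apply_e_le_opNorm φ _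

theorem not_summable_blockSeq : ¬ Summable blockSeq := by
  rw [summable_iff_vanishing_norm]
  push Not
  refine ⟨1, one_pos, fun s => ⟨Ioc (triangular (s.sup id)) (triangular (s.sup id + 1)), ?_, ?_⟩⟩
  · refine disjoint_left.2 fun i hi his => ?_
    have hi_gt : s.sup id < i := (le_triangular_self _).trans_lt (mem_Ioc.1 hi).1
    exact (le_sup (f := id) his).not_gt hi_gt
  · rw [sum_blockSeq_Ioc]
    exact one_le_norm_e _

end Blocks

section DiagonalTensors

open Finset

theorem norm_sum_tprod_blockSeq_le (k M : ℕ) (F : Finset ℕ) (hF : ∀ j ∈ F, triangular M < j) :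
    ‖∑ j ∈ F, ⨂ₜ[ℝ] _ : Fin (k + 2), blockSeq j‖ ≤ ((M : ℝ) + 1)⁻¹ := by
  set S := F.image blockIndex
  set a : ℕ → ℝ := fun n => #{j ∈ F | blockIndex j = n} * (n : ℝ)⁻¹ ^ (k + 2)
  have hsum : ∑ j ∈ F, (⨂ₜ[ℝ] _ : Fin (k + 2), blockSeq j) =
      ∑ n : S, a n • ⨂ₜ[ℝ] _ : Fin (k + 2), e n := by
    have htprod (j : ℕ) : (⨂ₜ[ℝ] _ : Fin (k + 2), blockSeq j) =
        (fun n : ℕ => (n : ℝ)⁻¹ ^ (k + 2) • ⨂ₜ[ℝ] _ : Fin (k + 2), e n) (blockIndex j) := by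
      simp [blockSeq, MultilinearMap.map_smul_univ]
    rw [sum_congr rfl fun j _ => htprod j,
      sum_comp (fun n : ℕ => (n : ℝ)⁻¹ ^ (k + 2) • ⨂ₜ[ℝ] _ : Fin (k + 2), e n) blockIndex,
      sum_coe_sort S (fun n => a n • ⨂ₜ[ℝ] _ : Fin (k + 2), e n)]
    simp [S, a, mul_smul, ← Nat.cast_smul_eq_nsmul ℝ]
  have ha (n : ℕ) (hn : n ∈ S) : |a n| ≤ ((M : ℝ) + 1)⁻¹ := by
    obtain ⟨j, hj, rfl⟩ := mem_image.1 hn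
    have hM : (M : ℝ) + 1 ≤ blockIndex j := by exact_mod_cast lt_blockIndex (hF j hj)
    have hpos : (0 : ℝ) < blockIndex j := by linarith
    rw [abs_of_nonneg (by positivity)]
    calc a (blockIndex j)
        = (#{i ∈ F | blockIndex i = blockIndex j} * (blockIndex j : ℝ)⁻¹) *
            (blockIndex j : ℝ)⁻¹ ^ (k + 1) := by simp only [a]; ring
      _ ≤ 1 * (blockIndex j : ℝ)⁻¹ ^ (k + 1) := by
          gcongr; exact card_filter_blockIndex_eq_mul_inv_le F _
      _ ≤ (blockIndex j : ℝ)⁻¹ := by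
          rw [one_mul]
          exact pow_le_of_le_one (by positivity) (inv_le_one_of_one_le₀ (by linarith))
            k.succ_ne_zero
      _ ≤ ((M : ℝ) + 1)⁻¹ := inv_anti₀ (by positivity) hM
  rw [hsum]
  refine (SignAveraging.norm_sum_smul_tprod_const_le (v := fun n : S => e n)
    (norm_sum_smul_e_le Subtype.val_injective) (fun n => a n)).trans ?_
  exact (pi_norm_le_iff_of_nonneg (by positivity)).2 fun n =>
    (Real.norm_eq_abs _).trans_le (ha n n.2)

end DiagonalTensors

open scoped TensorProduct

open PiTensorProduct in
/-- There is a w.u.C. non-unconditionally-convergent series `∑ yᵢ` in `c₀` whose diagonal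
tensors form an unconditionally Cauchy series for the projective seminorm on `⊗^k c₀`, `k ≥ 2`;
one such is given by `yᵢ = eₙ / n` for `n(n−1)/2 < i ≤ n(n+1)/2`. -/
theorem exists_wuc_not_uc_diagonal_tensors_uc :
    ∃ y : ℕ → c0,
      (∀ i n : ℕ, n * (n - 1) / 2 < i → i ≤ n * (n + 1) / 2 → y i = ((n : ℝ))⁻¹ • e n) ∧
      WUC y ∧ ¬ Summable y ∧
      ∀ k : ℕ, 2 ≤ k → ∀ ε : ℝ, 0 < ε → ∃ N : ℕ, ∀ F : Finset ℕ,
        (∀ j ∈ F, N < j) →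
        projectiveSeminorm (∑ j ∈ F, tprod ℝ (fun _ : Fin k => y j)) < ε := by
  refine ⟨blockSeq, fun i n h₁ h₂ => ?_, wuc_blockSeq, not_summable_blockSeq, fun k hk ε hε => ?_⟩
  · obtain ⟨m, rfl⟩ : ∃ m, n = m + 1 := Nat.exists_eq_succ_of_ne_zero (by rintro rfl; omega)
    exact blockSeq_eq (Finset.mem_Ioc.2 ⟨by simpa [triangular, mul_comm] using h₁, h₂⟩)
  · obtain ⟨k, rfl⟩ := Nat.exists_eq_add_of_le' hk
    obtain ⟨M, hM⟩ := exists_nat_one_div_lt hε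
    refine ⟨triangular M, fun F hF => (norm_sum_tprod_blockSeq_le k M F hF).trans_lt ?_⟩
    simpa using hM
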